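/- Let N ≥ 2, let k ∈ Z/NZ, let n be the size of the k-monomial minimal solution of (E_N), and suppose this solution is irreducible. Then for every integer l ≥ 2 and every a ∈ Z/NZ, the l-tuple (a, k, …, k, a) (whose first and last entries are a and whose l−2 middle entries all equal k) is a solution of (E_N) if and only if either l ≡ 0 (mod n) and a = k, or l ≡ 2 (mod n) and a = 0. -/

import Mathlib

open Matrix

/-- The elementary matrix `[[a, -1], [1, 0]]` over `ZMod N`. -/
def genMat {N : ℕ} (a : ZMod N) : Matrix (Fin 2) (Fin 2) (ZMod N) :=
  !![a, -1; 1, 0]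

/-- `Mword [a₁, …, aₙ]` is the matrix `Mₙ(a₁, …, aₙ) = genMat aₙ * ⋯ * genMat a₁`. -/
def Mword {N : ℕ} (l : List (ZMod N)) : Matrix (Fin 2) (Fin 2) (ZMod N) :=
  (l.reverse.map genMat).prod

/-- A tuple (encoded as a list) is a solution of `(E_N)` if its matrix is `±Id`. -/
def IsSolutionE {N : ℕ} (l : List (ZMod N)) : Prop :=
  Mword l = 1 ∨ Mword l = -1

/-- The size of the `k`-monomial minimal solution of `(E_N)`: the least positive `n`
such that the constant `n`-tuple `(k, …, k)` is a solution of `(E_N)`. -/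
noncomputable def monomialSize (N : ℕ) (k : ZMod N) : ℕ :=
  sInf {n : ℕ | 0 < n ∧ IsSolutionE (List.replicate n k)}

/-- The `k`-monomial minimal solution of `(E_N)`. -/
noncomputable def monoSol (N : ℕ) (k : ZMod N) : List (ZMod N) :=
  List.replicate (monomialSize N k) k

/-- The sum `⊕` of two tuples:
`(a₁,…,aₘ) ⊕ (b₁,…,bₗ) = (a₁+bₗ, a₂, …, aₘ₋₁, aₘ+b₁, b₂, …, bₗ₋₁)`. -/
def oplus {N : ℕ} (a b : List (ZMod N)) : List (ZMod N) :=
  (a.headD 0 + b.getLastD 0) ::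
    ((a.drop 1).dropLast ++ (a.getLastD 0 + b.headD 0) :: (b.drop 1).dropLast)

/-- Two tuples are equivalent (`∼`) if one is obtained from the other by a cyclic
permutation, possibly composed with order reversal. -/
def TupEquiv {N : ℕ} (c d : List (ZMod N)) : Prop :=
  (∃ i, d = c.rotate i) ∨ (∃ i, d = c.reverse.rotate i)

/-- A tuple is reducible if it is equivalent to a sum `a ⊕ b` where `b` is a solution of
`(E_N)` and both `a`, `b` have length at least `3`. -/
def IsReducibleE {N : ℕ} (c : List (ZMod N)) : Prop :=
  ∃ a b : List (ZMod N), 3 ≤ a.length ∧ 3 ≤ b.length ∧ IsSolutionE b ∧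
    TupEquiv c (oplus a b)

/-- An irreducible solution of `(E_N)`: a solution of size at least `3` that is not
reducible (the solution `(0,0)` is not considered irreducible). -/
def IsIrreducibleE {N : ℕ} (c : List (ZMod N)) : Prop :=
  IsSolutionE c ∧ 3 ≤ c.length ∧ ¬ IsReducibleE c

/-- A reducible solution of `(E_N)`: a solution that is not irreducible. -/
def IsReducibleSol {N : ℕ} (c : List (ZMod N)) : Prop :=
  IsSolutionE c ∧ ¬ IsIrreducibleE c

/-- `N` is monomially irreducible if for every nonzero `k ∈ ZMod N` the `k`-monomial
minimal solution of `(E_N)` is irreducible. -/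
def MonomiallyIrreducible (N : ℕ) : Prop :=
  ∀ k : ZMod N, k ≠ 0 → IsIrreducibleE (monoSol N k)

/-- `N` is quasi monomially irreducible if for every integer `k` coprime to `N` the
`(k mod N)`-monomial minimal solution of `(E_N)` is irreducible. -/
def QuasiMonomiallyIrreducible (N : ℕ) : Prop :=
  ∀ k : ℤ, Int.gcd k (N : ℤ) = 1 → IsIrreducibleE (monoSol N (k : ZMod N))

/-- `N` is semi monomially irreducible: if `N` is even but not divisible by `4`, this
requires that for every integer `a` coprime to `N/2` the `(2a mod N)`-monomial minimal
solution of `(E_N)` is irreducible; otherwise (i.e. `N` odd or divisible by `4`), it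
requires the same for every integer `a` coprime to `N`. -/
def SemiMonomiallyIrreducible (N : ℕ) : Prop :=
  if 2 ∣ N ∧ ¬ (4 ∣ N) then
    ∀ a : ℤ, Int.gcd a ((N / 2 : ℕ) : ℤ) = 1 →
      IsIrreducibleE (monoSol N ((2 * a : ℤ) : ZMod N))
  else
    ∀ a : ℤ, Int.gcd a (N : ℤ) = 1 →
      IsIrreducibleE (monoSol N ((2 * a : ℤ) : ZMod N))

/-!
Write `M = genMat k`. Irreducibility of the monomial solution gives `M ^ n = ±1`, so
`(a, k, …, k, a)` with `m` middle entries is a solution iff the one with `m % n` middle entries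
is. For `1 ≤ r ≤ n - 3` middle entries a solution would split the monomial solution as
`(k - a, k, …, k, k - a) ⊕ (a, k, …, k, a)`, contradicting irreducibility. The residues
`r = 0, n - 2, n - 1` are settled by computing `genMat a * M ^ r * genMat a`, using
`M ^ (n - j) = ±M⁻ʲ`.
-/

section Sign

variable {R : Type*} [Monoid R] [HasDistribNeg R]

lemma mul_sign_mul_eq_one_or_neg_one_iff {s : R} (hs : s = 1 ∨ s = -1) (x y : R) :
    (x * (s * y) = 1 ∨ x * (s * y) = -1) ↔ (x * y = 1 ∨ x * y = -1) := by
  rcases hs with rfl | rfl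
  · simp only [one_mul]
  · simp only [neg_one_mul, mul_neg, neg_eq_iff_eq_neg, neg_neg]
    exact or_comm

lemma pow_eq_one_or_neg_one {x : R} (hx : x = 1 ∨ x = -1) (t : ℕ) : x ^ t = 1 ∨ x ^ t = -1 := by
  rcases hx with rfl | rfl
  · exact .inl (one_pow t)
  · exact neg_one_pow_eq_or R t

end Sign

lemma Matrix.apply_zero_one_eq_zero_of_eq_one_or_neg_one {R : Type*} [Ring R]
    {X : Matrix (Fin 2) (Fin 2) R} (h : X = 1 ∨ X = -1) : X 0 1 = 0 := by
  rcases h with rfl | rfl <;> simp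

section Monomial

variable {N : ℕ}

def invMat (k : ZMod N) : Matrix (Fin 2) (Fin 2) (ZMod N) := !![0, 1; -1, k]

lemma genMat_mul_invMat (k : ZMod N) : genMat k * invMat k = 1 := by
  simp [genMat, invMat, Matrix.one_fin_two]

lemma genMat_pow_sub {m n : ℕ} (k : ZMod N) (hmn : m ≤ n) :
    genMat k ^ (n - m) = genMat k ^ n * invMat k ^ m := by
  rw [← pow_sub_mul_pow (genMat k) hmn, mul_assoc, pow_mul_pow_eq_one m (genMat_mul_invMat k),
    mul_one]

lemma Mword_replicate (k : ZMod N) (m : ℕ) : Mword (List.replicate m k) = genMat k ^ m := by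
  simp [Mword]

def borderedReplicate (a k : ZMod N) (m : ℕ) : List (ZMod N) :=
  a :: (List.replicate m k ++ [a])

lemma borderedReplicate_self (k : ZMod N) (m : ℕ) :
    borderedReplicate k k m = List.replicate (m + 2) k := by
  rw [borderedReplicate, ← List.replicate_succ', ← List.replicate_succ]

lemma Mword_borderedReplicate (a k : ZMod N) (m : ℕ) :
    Mword (borderedReplicate a k m) = genMat a * (genMat k ^ m * genMat a) := by
  simp [borderedReplicate, Mword]

lemma isSolutionE_borderedReplicate_iff_mod {k : ZMod N} {n : ℕ}
    (hS : IsSolutionE (List.replicate n k)) (a : ZMod N) (m : ℕ) :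
    IsSolutionE (borderedReplicate a k m) ↔ IsSolutionE (borderedReplicate a k (m % n)) := by
  rw [IsSolutionE, Mword_replicate] at hS
  have hpow : genMat k ^ m = (genMat k ^ n) ^ (m / n) * genMat k ^ (m % n) := by
    rw [← pow_mul, ← pow_add, Nat.div_add_mod]
  rw [IsSolutionE, IsSolutionE, Mword_borderedReplicate, Mword_borderedReplicate, hpow, mul_assoc]
  exact mul_sign_mul_eq_one_or_neg_one_iff (pow_eq_one_or_neg_one hS _) _ _

lemma isSolutionE_borderedReplicate_zero_iff (a k : ZMod N) :
    IsSolutionE (borderedReplicate a k 0) ↔ a = 0 := by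
  rw [IsSolutionE, Mword_borderedReplicate, pow_zero, one_mul]
  constructor
  · intro h
    simpa [genMat] using Matrix.apply_zero_one_eq_zero_of_eq_one_or_neg_one h
  · rintro rfl
    right
    ext i j
    fin_cases i <;> fin_cases j <;> simp [genMat]

lemma eq_of_isSolutionE_borderedReplicate_sub_two {a k : ZMod N} {n : ℕ}
    (hS : IsSolutionE (List.replicate n k)) (hn : 2 ≤ n)
    (h : IsSolutionE (borderedReplicate a k (n - 2))) : a = k := by
  rw [IsSolutionE, Mword_replicate] at hS
  rw [IsSolutionE, Mword_borderedReplicate, genMat_pow_sub k hn, mul_assoc,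
    mul_sign_mul_eq_one_or_neg_one_iff hS] at h
  have h01 : a + -k = 0 := by
    simpa [genMat, invMat, sq] using Matrix.apply_zero_one_eq_zero_of_eq_one_or_neg_one h
  linear_combination h01

lemma genMat_mul_invMat_mul_genMat (a k : ZMod N) :
    genMat a * (invMat k * genMat a) = genMat (2 * a - k) := by
  ext i j
  fin_cases i <;> fin_cases j <;> simp [genMat, invMat]
  ring

lemma not_isSolutionE_borderedReplicate_sub_one [Nontrivial (ZMod N)] {a k : ZMod N} {n : ℕ}
    (hS : IsSolutionE (List.replicate n k)) (hn : 1 ≤ n) :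
    ¬ IsSolutionE (borderedReplicate a k (n - 1)) := by
  rw [IsSolutionE, Mword_replicate] at hS
  rw [IsSolutionE, Mword_borderedReplicate, genMat_pow_sub k hn, pow_one, mul_assoc,
    mul_sign_mul_eq_one_or_neg_one_iff hS, genMat_mul_invMat_mul_genMat]
  intro h
  simpa [genMat] using Matrix.apply_zero_one_eq_zero_of_eq_one_or_neg_one h

lemma oplus_borderedReplicate (a k : ZMod N) (s r : ℕ) :
    oplus (borderedReplicate (k - a) k s) (borderedReplicate a k r) =
      List.replicate (s + r + 2) k := by
  simp only [oplus, borderedReplicate, ← List.cons_append, List.getLastD_concat, List.drop_one]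
  rw [show s + r + 2 = (s + 1) + (r + 1) by ring, List.replicate_add]
  simp [List.replicate_succ]

lemma isReducibleE_replicate_of_isSolutionE_borderedReplicate {a k : ZMod N} {n r : ℕ}
    (h : IsSolutionE (borderedReplicate a k r)) (hr : 1 ≤ r) (hrn : r + 3 ≤ n) :
    IsReducibleE (List.replicate n k) := by
  refine ⟨borderedReplicate (k - a) k (n - r - 2), borderedReplicate a k r, ?_, ?_, h,
    .inl ⟨0, ?_⟩⟩
  · simp only [borderedReplicate, List.length_cons, List.length_append, List.length_replicate]
    omega
  · simp only [borderedReplicate, List.length_cons, List.length_append, List.length_replicate]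
    omega
  · rw [List.rotate_zero, oplus_borderedReplicate]
    congr 1
    omega

lemma isSolutionE_borderedReplicate_iff_of_lt [Nontrivial (ZMod N)] {k : ZMod N} {n r : ℕ}
    (hS : IsSolutionE (List.replicate n k)) (hirr : ¬ IsReducibleE (List.replicate n k))
    (hn : 3 ≤ n) (hr : r < n) (a : ZMod N) :
    IsSolutionE (borderedReplicate a k r) ↔ (r = n - 2 ∧ a = k) ∨ (r = 0 ∧ a = 0) := by
  constructor
  · intro h
    obtain rfl | hr0 := Nat.eq_zero_or_pos r
    · exact .inr ⟨rfl, (isSolutionE_borderedReplicate_zero_iff a k).1 h⟩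
    obtain rfl | hr2 := eq_or_ne r (n - 2)
    · exact .inl ⟨rfl, eq_of_isSolutionE_borderedReplicate_sub_two hS (by omega) h⟩
    obtain rfl | hr1 := eq_or_ne r (n - 1)
    · exact absurd h (not_isSolutionE_borderedReplicate_sub_one hS (by omega))
    exact absurd (isReducibleE_replicate_of_isSolutionE_borderedReplicate h hr0 (by omega)) hirr
  · rintro (⟨rfl, rfl⟩ | ⟨rfl, rfl⟩)
    · rwa [borderedReplicate_self, Nat.sub_add_cancel (by omega)]
    · exact (isSolutionE_borderedReplicate_zero_iff 0 k).2 rfl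

end Monomial

lemma Nat.mod_eq_iff_add_modEq {x r n : ℕ} (hr : r < n) (c : ℕ) :
    x % n = r ↔ x + c ≡ r + c [MOD n] := by
  rw [(Nat.ModEq.refl c).add_iff_right, Nat.ModEq, Nat.mod_eq_of_lt hr]

/-- if the `k`-monomial minimal solution of `(E_N)` (of size `n`) is
irreducible, then for `l ≥ 2` and `a ∈ ZMod N`, the `l`-tuple `(a, k, …, k, a)` is a
solution of `(E_N)` iff `l ≡ 0 [MOD n]` and `a = k`, or `l ≡ 2 [MOD n]` and `a = 0`. -/
theorem stmt_8 (N : ℕ) (hN : 2 ≤ N) (k : ZMod N) (n : ℕ) (hn : n = monomialSize N k)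
    (hirr : IsIrreducibleE (monoSol N k)) (l : ℕ) (hl : 2 ≤ l) (a : ZMod N) :
    IsSolutionE (a :: (List.replicate (l - 2) k ++ [a])) ↔
      ((l ≡ 0 [MOD n] ∧ a = k) ∨ (l ≡ 2 [MOD n] ∧ a = 0)) := by
  have : Fact (1 < N) := ⟨hN⟩
  obtain ⟨hS, hlen, hirr⟩ := hirr
  rw [monoSol, ← hn] at hS hlen hirr
  rw [List.length_replicate] at hlen
  change IsSolutionE (borderedReplicate a k (l - 2)) ↔ _
  rw [isSolutionE_borderedReplicate_iff_mod hS,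
    isSolutionE_borderedReplicate_iff_of_lt hS hirr hlen (Nat.mod_lt _ (by omega)),
    Nat.mod_eq_iff_add_modEq (by omega) 2, Nat.mod_eq_iff_add_modEq (by omega) 2,
    Nat.sub_add_cancel hl, Nat.sub_add_cancel (by omega : 2 ≤ n), zero_add]
  simp only [Nat.ModEq, Nat.mod_self, Nat.zero_mod]
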